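/- (Euler-factor tilt, large-p regime.) For every real λ > 0 there exists p₀ ∈ ℕ such that for every prime p ≥ p₀ the following holds: setting t = 1/Real.sqrt p (so t ∈ (0,1)), h_t(x) = 1 − 2·t·x + t², and g_t(x) = −Real.log (h_t(x)), the covariance of g_t and x² under the Euler-factor tilted semicircle is strictly positive: Cov^t_λ(g_t, x²) = E^t_λ[g_t(x)·x²] − E^t_λ[g_t(x)]·E^t_λ[x²] > 0. -/

import Mathlib

open intervalIntegral

/-- The Euler-factor polynomial `h_t(x) = 1 − 2tx + t²`. -/
noncomputable def eulerH (t x : ℝ) : ℝ := 1 - 2 * t * x + t ^ 2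

/-- The Euler-factor tilted weight `u_{t,λ}(x) = √(1 − x²)·h_t(x)^{−λ}` on `[-1,1]`. -/
noncomputable def eulerW (t lam x : ℝ) : ℝ := Real.sqrt (1 - x ^ 2) * eulerH t x ^ (-lam)

/-- The normalization constant `Z_t(λ)`. -/
noncomputable def eulerZ (t lam : ℝ) : ℝ := ∫ x in (-1 : ℝ)..1, eulerW t lam x

/-- The mean `E^t_λ[f]` under the Euler-factor tilted semicircle measure. -/
noncomputable def eulerE (t lam : ℝ) (f : ℝ → ℝ) : ℝ :=
  (eulerZ t lam)⁻¹ * ∫ x in (-1 : ℝ)..1, f x * eulerW t lam x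

/-- The covariance `Cov^t_λ(f, g)` under the Euler-factor tilted semicircle measure. -/
noncomputable def eulerCov (t lam : ℝ) (f g : ℝ → ℝ) : ℝ :=
  eulerE t lam (fun x => f x * g x) - eulerE t lam f * eulerE t lam g

/-!
Write `w = u_{t,λ}` and `f = -log h_t`. The covariance numerator `Z·∫ f x² w - ∫ f w · ∫ x² w`
is half of `∬ (f u - f y)(u² - y²) w(u) w(y)` over `[-1, 1]²`. This kernel changes sign, but its
sum with its value at `(-u, -y)` does not: on the cone `|y| ≤ u` it is `u² - y²` times
`(log h_t(y) - log h_t(u)) w(u) w(y) - (log h_t(-u) - log h_t(-y)) w(-u) w(-y)`, and the first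
product dominates the second since `h_t(x) h_t(-x) = (1 + t²)² - 4t²x²` and
`h_t(-u) h_t(-y) - h_t(u) h_t(y) = 4t(1 + t²)(u + y)`. The covariance is therefore positive for
every `t ∈ (0, 1)` and `λ ≥ 0`, so `p₀ = 2` works.
-/

open Set
open MeasureTheory (volume)

section PairKernel

variable {f g w : ℝ → ℝ} {a b : ℝ}

def pairKernel (f g w : ℝ → ℝ) (u y : ℝ) : ℝ := (f u - f y) * (g u - g y) * (w u * w y)

theorem pairKernel_comm (u y : ℝ) : pairKernel f g w u y = pairKernel f g w y u := by
  unfold pairKernel; ring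

theorem pairKernel_eq (u y : ℝ) :
    pairKernel f g w u y = f u * g u * w u * w y - f u * w u * (g y * w y)
      - g u * w u * (f y * w y) + w u * (f y * g y * w y) := by
  unfold pairKernel; ring

theorem intervalIntegrable_pairKernel (hw : IntervalIntegrable w volume a b)
    (hfw : IntervalIntegrable (fun x => f x * w x) volume a b)
    (hgw : IntervalIntegrable (fun x => g x * w x) volume a b)
    (hfgw : IntervalIntegrable (fun x => f x * g x * w x) volume a b) (u : ℝ) :
    IntervalIntegrable (pairKernel f g w u) volume a b := by
  simp only [funext (pairKernel_eq (f := f) (g := g) (w := w) u)]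
  exact (((hw.const_mul _).sub (hgw.const_mul _)).sub (hfw.const_mul _)).add (hfgw.const_mul _)

theorem integral_pairKernel (hw : IntervalIntegrable w volume a b)
    (hfw : IntervalIntegrable (fun x => f x * w x) volume a b)
    (hgw : IntervalIntegrable (fun x => g x * w x) volume a b)
    (hfgw : IntervalIntegrable (fun x => f x * g x * w x) volume a b) (u : ℝ) :
    ∫ y in a..b, pairKernel f g w u y =
      f u * g u * w u * (∫ y in a..b, w y) - f u * w u * (∫ y in a..b, g y * w y)
        - g u * w u * (∫ y in a..b, f y * w y) + w u * ∫ y in a..b, f y * g y * w y := by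
  simp only [pairKernel_eq]
  rw [integral_add (((hw.const_mul _).sub (hgw.const_mul _)).sub (hfw.const_mul _))
      (hfgw.const_mul _), integral_sub ((hw.const_mul _).sub (hgw.const_mul _)) (hfw.const_mul _),
    integral_sub (hw.const_mul _) (hgw.const_mul _)]
  simp only [integral_const_mul]

theorem intervalIntegrable_integral_pairKernel (hw : IntervalIntegrable w volume a b)
    (hfw : IntervalIntegrable (fun x => f x * w x) volume a b)
    (hgw : IntervalIntegrable (fun x => g x * w x) volume a b)
    (hfgw : IntervalIntegrable (fun x => f x * g x * w x) volume a b) :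
    IntervalIntegrable (fun u => ∫ y in a..b, pairKernel f g w u y) volume a b := by
  simp only [integral_pairKernel hw hfw hgw hfgw]
  exact (((hfgw.mul_const _).sub (hfw.mul_const _)).sub (hgw.mul_const _)).add (hw.mul_const _)

theorem integral_integral_pairKernel (hw : IntervalIntegrable w volume a b)
    (hfw : IntervalIntegrable (fun x => f x * w x) volume a b)
    (hgw : IntervalIntegrable (fun x => g x * w x) volume a b)
    (hfgw : IntervalIntegrable (fun x => f x * g x * w x) volume a b) :
    ∫ u in a..b, ∫ y in a..b, pairKernel f g w u y =
      2 * ((∫ x in a..b, w x) * (∫ x in a..b, f x * g x * w x)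
        - (∫ x in a..b, f x * w x) * ∫ x in a..b, g x * w x) := by
  simp only [integral_pairKernel hw hfw hgw hfgw]
  rw [integral_add (((hfgw.mul_const _).sub (hfw.mul_const _)).sub (hgw.mul_const _))
      (hw.mul_const _), integral_sub ((hfgw.mul_const _).sub (hfw.mul_const _)) (hgw.mul_const _),
    integral_sub (hfgw.mul_const _) (hfw.mul_const _)]
  simp only [integral_mul_const]
  ring

end PairKernel

theorem intervalIntegral_pos_of_nonneg_of_pos_on_Ioo {φ : ℝ → ℝ} {a b c d : ℝ}
    (hφ : IntervalIntegrable φ volume a b) (hnonneg : ∀ x ∈ Icc a b, 0 ≤ φ x)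
    (hac : a ≤ c) (hcd : c < d) (hdb : d ≤ b) (hpos : ∀ x ∈ Ioo c d, 0 < φ x) :
    0 < ∫ x in a..b, φ x := by
  have hsub : uIcc c d ⊆ uIcc a b := uIcc_subset_uIcc (mem_uIcc_of_le hac (hcd.le.trans hdb))
    (mem_uIcc_of_le (hac.trans hcd.le) hdb)
  calc 0 < ∫ x in c..d, φ x := intervalIntegral_pos_of_pos_on (hφ.mono_set hsub) hpos hcd
    _ ≤ ∫ x in a..b, φ x :=
      integral_mono_interval hac hcd.le hdb ((MeasureTheory.ae_restrict_iff' measurableSet_Ioc).2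
        (Filter.Eventually.of_forall fun x hx => hnonneg x (Ioc_subset_Icc_self hx))) hφ

theorem IntervalIntegrable.comp_neg_symm {φ : ℝ → ℝ} {c : ℝ}
    (hφ : IntervalIntegrable φ volume (-c) c) :
    IntervalIntegrable (fun x => φ (-x)) volume (-c) c := by
  simpa using ((IntervalIntegrable.iff_comp_neg (by finiteness)).1 hφ).symm

theorem integral_comp_neg_symm (φ : ℝ → ℝ) (c : ℝ) :
    ∫ x in -c..c, φ (-x) = ∫ x in -c..c, φ x := by
  simp [integral_comp_neg]

theorem integral_integral_pos_of_symmetrization {K : ℝ → ℝ → ℝ} {c : ℝ} (hc : 0 < c)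
    (hK : ∀ u, IntervalIntegrable (K u) volume (-c) c)
    (hF : IntervalIntegrable (fun u => ∫ y in -c..c, K u y) volume (-c) c)
    (hnonneg : ∀ u ∈ Icc (-c) c, ∀ y ∈ Icc (-c) c, 0 ≤ K u y + K (-u) (-y))
    (hpos : ∀ u ∈ Ioo 0 c, ∀ y ∈ Ioo (-u) u, 0 < K u y + K (-u) (-y)) :
    0 < ∫ u in -c..c, ∫ y in -c..c, K u y := by
  set F := fun u => ∫ y in -c..c, K u y
  have hKsymm : ∀ u, IntervalIntegrable (fun y => K u y + K (-u) (-y)) volume (-c) c :=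
    fun u => (hK u).add (hK (-u)).comp_neg_symm
  have hFsymm : ∀ u, F u + F (-u) = ∫ y in -c..c, (K u y + K (-u) (-y)) := fun u => by
    rw [integral_add (hK u) (hK (-u)).comp_neg_symm, integral_comp_neg_symm (K (-u))]
  have hpos_symm : 0 < ∫ u in -c..c, (F u + F (-u)) := by
    refine intervalIntegral_pos_of_nonneg_of_pos_on_Ioo (hF.add hF.comp_neg_symm)
      (fun u hu => ?_) (by linarith) hc le_rfl (fun u hu => ?_)
    · rw [hFsymm]
      exact integral_nonneg (by linarith) (hnonneg u hu)
    · rw [hFsymm]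
      refine intervalIntegral_pos_of_nonneg_of_pos_on_Ioo (hKsymm u)
        (hnonneg u ⟨by linarith [hu.1], hu.2.le⟩) (by linarith [hu.2]) (by linarith [hu.1])
        (by linarith [hu.2]) (hpos u hu)
  rw [integral_add hF hF.comp_neg_symm, integral_comp_neg_symm F] at hpos_symm
  linarith

section EulerFactor

variable {t lam x u y : ℝ}

theorem eulerH_pos (ht : |t| < 1) (hx : |x| ≤ 1) : 0 < eulerH t x := by
  have htx : |t * x| ≤ |t| := by
    rw [abs_mul]; exact mul_le_of_le_one_right (abs_nonneg t) hx
  have hsq : (1 - |t|) ^ 2 = 1 - 2 * |t| + t ^ 2 := by rw [sub_sq, sq_abs]; ring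
  have : 0 < (1 - |t|) ^ 2 := pow_pos (by linarith) 2
  unfold eulerH
  linarith [le_abs_self (t * x)]

theorem eulerH_mul_eulerH_neg (t x : ℝ) :
    eulerH t x * eulerH t (-x) = (1 + t ^ 2) ^ 2 - 4 * t ^ 2 * x ^ 2 := by
  unfold eulerH; ring

theorem eulerH_neg_mul_sub_mul (t u y : ℝ) :
    eulerH t (-u) * eulerH t (-y) - eulerH t u * eulerH t y = 4 * t * (1 + t ^ 2) * (u + y) := by
  unfold eulerH; ring

theorem eulerW_pos (ht : |t| < 1) (hx : |x| < 1) : 0 < eulerW t lam x := by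
  have : x ^ 2 < 1 := by simpa using sq_lt_sq.2 (hx.trans_eq abs_one.symm)
  exact mul_pos (Real.sqrt_pos.2 (by linarith)) (Real.rpow_pos_of_pos (eulerH_pos ht hx.le) _)

theorem eulerW_nonneg (ht : |t| < 1) (hx : |x| ≤ 1) : 0 ≤ eulerW t lam x :=
  mul_nonneg (Real.sqrt_nonneg _) (Real.rpow_pos_of_pos (eulerH_pos ht hx) _).le

theorem eulerW_neg_mul_le (ht₀ : 0 ≤ t) (ht₁ : t < 1) (hlam : 0 ≤ lam) (hu : |u| ≤ 1)
    (hy : |y| ≤ 1) (huy : 0 ≤ u + y) :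
    eulerW t lam (-u) * eulerW t lam (-y) ≤ eulerW t lam u * eulerW t lam y := by
  have ht : |t| < 1 := by rwa [abs_of_nonneg ht₀]
  have hneg : ∀ {x : ℝ}, |x| ≤ 1 → |-x| ≤ 1 := fun hx => (abs_neg _).trans_le hx
  have hprod : eulerH t u * eulerH t y ≤ eulerH t (-u) * eulerH t (-y) := by
    have := eulerH_neg_mul_sub_mul t u y
    have : 0 ≤ 4 * t * (1 + t ^ 2) * (u + y) := by positivity
    linarith
  have hrpow : eulerH t (-u) ^ (-lam) * eulerH t (-y) ^ (-lam)
      ≤ eulerH t u ^ (-lam) * eulerH t y ^ (-lam) := by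
    rw [← Real.mul_rpow (eulerH_pos ht (hneg hu)).le (eulerH_pos ht (hneg hy)).le,
      ← Real.mul_rpow (eulerH_pos ht hu).le (eulerH_pos ht hy).le]
    exact Real.rpow_le_rpow_of_nonpos (mul_pos (eulerH_pos ht hu) (eulerH_pos ht hy)) hprod
      (neg_nonpos.2 hlam)
  calc eulerW t lam (-u) * eulerW t lam (-y)
      = (√(1 - u ^ 2) * √(1 - y ^ 2)) * (eulerH t (-u) ^ (-lam) * eulerH t (-y) ^ (-lam)) := by
        unfold eulerW; rw [neg_sq, neg_sq]; ring
    _ ≤ (√(1 - u ^ 2) * √(1 - y ^ 2)) * (eulerH t u ^ (-lam) * eulerH t y ^ (-lam)) := by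
        gcongr
    _ = eulerW t lam u * eulerW t lam y := by unfold eulerW; ring

noncomputable def eulerKernel (t lam : ℝ) : ℝ → ℝ → ℝ :=
  pairKernel (fun x => -Real.log (eulerH t x)) (fun x => x ^ 2) (eulerW t lam)

theorem eulerKernel_add_neg_eq (t lam u y : ℝ) :
    eulerKernel t lam u y + eulerKernel t lam (-u) (-y) =
      (u ^ 2 - y ^ 2) *
        ((Real.log (eulerH t y) - Real.log (eulerH t u)) * (eulerW t lam u * eulerW t lam y)
          - (Real.log (eulerH t (-u)) - Real.log (eulerH t (-y)))
            * (eulerW t lam (-u) * eulerW t lam (-y))) := by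
  unfold eulerKernel pairKernel; ring

theorem eulerKernel_add_neg_nonneg_of_abs_le (ht₀ : 0 ≤ t) (ht₁ : t < 1) (hlam : 0 ≤ lam)
    (hu : u ≤ 1) (hyu : |y| ≤ u) :
    0 ≤ eulerKernel t lam u y + eulerKernel t lam (-u) (-y) := by
  have ht : |t| < 1 := by rwa [abs_of_nonneg ht₀]
  obtain ⟨hyu₁, hyu₂⟩ := abs_le.1 hyu
  have hu' : |u| ≤ 1 := abs_le.2 ⟨by linarith, hu⟩
  have hy' : |y| ≤ 1 := hyu.trans hu
  have hsq : y ^ 2 ≤ u ^ 2 := sq_le_sq' hyu₁ hyu₂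
  have hH : ∀ {x : ℝ}, |x| ≤ 1 → 0 < eulerH t x := eulerH_pos ht
  have hneg : ∀ {x : ℝ}, |x| ≤ 1 → |-x| ≤ 1 := fun hx => (abs_neg _).trans_le hx
  have hQ : 0 ≤ Real.log (eulerH t (-u)) - Real.log (eulerH t (-y)) :=
    sub_nonneg.2 (Real.log_le_log (hH (hneg hy')) (by unfold eulerH; nlinarith))
  have hQP : Real.log (eulerH t (-u)) - Real.log (eulerH t (-y))
      ≤ Real.log (eulerH t y) - Real.log (eulerH t u) := by
    have := Real.log_le_log (y := eulerH t y * eulerH t (-y)) (mul_pos (hH hu') (hH (hneg hu')))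
      (by rw [eulerH_mul_eulerH_neg, eulerH_mul_eulerH_neg]; nlinarith)
    rw [Real.log_mul (hH hu').ne' (hH (hneg hu')).ne',
      Real.log_mul (hH hy').ne' (hH (hneg hy')).ne'] at this
    linarith
  rw [eulerKernel_add_neg_eq]
  refine mul_nonneg (by linarith) (sub_nonneg.2 (mul_le_mul hQP ?_ ?_ (hQ.trans hQP)))
  · exact eulerW_neg_mul_le ht₀ ht₁ hlam hu' hy' (by linarith)
  · exact mul_nonneg (eulerW_nonneg ht (hneg hu')) (eulerW_nonneg ht (hneg hy'))

theorem eulerKernel_add_neg_pos_of_abs_lt (ht₀ : 0 < t) (ht₁ : t < 1) (hlam : 0 ≤ lam)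
    (hu : u < 1) (hyu : |y| < u) :
    0 < eulerKernel t lam u y + eulerKernel t lam (-u) (-y) := by
  have ht : |t| < 1 := by rwa [abs_of_pos ht₀]
  obtain ⟨hyu₁, hyu₂⟩ := abs_lt.1 hyu
  have hu' : |u| < 1 := abs_lt.2 ⟨by linarith, hu⟩
  have hy' : |y| < 1 := hyu.trans hu
  have hsq : y ^ 2 < u ^ 2 := sq_lt_sq' hyu₁ hyu₂
  have hH : ∀ {x : ℝ}, |x| < 1 → 0 < eulerH t x := fun hx => eulerH_pos ht hx.le
  have hneg : ∀ {x : ℝ}, |x| < 1 → |-x| < 1 := fun hx => (abs_neg _).trans_lt hx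
  have hQ : 0 ≤ Real.log (eulerH t (-u)) - Real.log (eulerH t (-y)) :=
    sub_nonneg.2 (Real.log_le_log (hH (hneg hy')) (by unfold eulerH; nlinarith))
  have hQP : Real.log (eulerH t (-u)) - Real.log (eulerH t (-y))
      < Real.log (eulerH t y) - Real.log (eulerH t u) := by
    have := Real.log_lt_log (y := eulerH t y * eulerH t (-y)) (mul_pos (hH hu') (hH (hneg hu')))
      (by rw [eulerH_mul_eulerH_neg, eulerH_mul_eulerH_neg]; nlinarith [pow_pos ht₀ 2])
    rw [Real.log_mul (hH hu').ne' (hH (hneg hu')).ne',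
      Real.log_mul (hH hy').ne' (hH (hneg hy')).ne'] at this
    linarith
  rw [eulerKernel_add_neg_eq]
  refine mul_pos (by linarith) (sub_pos.2 (mul_lt_mul hQP ?_ ?_ (hQ.trans hQP.le)))
  · exact eulerW_neg_mul_le ht₀.le ht₁ hlam hu'.le hy'.le (by linarith)
  · exact mul_pos (eulerW_pos ht (hneg hu')) (eulerW_pos ht (hneg hy'))

theorem eulerKernel_add_neg_nonneg (ht₀ : 0 ≤ t) (ht₁ : t < 1) (hlam : 0 ≤ lam)
    (hu : |u| ≤ 1) (hy : |y| ≤ 1) :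
    0 ≤ eulerKernel t lam u y + eulerKernel t lam (-u) (-y) := by
  wlog hyu : |y| ≤ |u| generalizing u y
  · simpa only [eulerKernel, pairKernel_comm] using this hy hu (le_of_not_ge hyu)
  wlog hu₀ : 0 ≤ u generalizing u y
  · have := this (u := -u) (y := -y) (by rwa [abs_neg]) (by rwa [abs_neg]) (by simpa using hyu)
      (by linarith)
    simpa only [neg_neg, add_comm] using this
  rw [abs_of_nonneg hu₀] at hu hyu
  exact eulerKernel_add_neg_nonneg_of_abs_le ht₀ ht₁ hlam hu hyu

end EulerFactor

section EulerCovariance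

variable {t lam : ℝ}

theorem continuousOn_eulerH_log (ht : |t| < 1) :
    ContinuousOn (fun x => Real.log (eulerH t x)) (Icc (-1) 1) :=
  ContinuousOn.log (by unfold eulerH; fun_prop) fun _ hx => (eulerH_pos ht (abs_le.2 hx)).ne'

theorem continuousOn_eulerW (ht : |t| < 1) : ContinuousOn (eulerW t lam) (Icc (-1) 1) := by
  unfold eulerW
  refine ContinuousOn.mul (by fun_prop) (ContinuousOn.rpow_const (by unfold eulerH; fun_prop) ?_)
  exact fun _ hx => Or.inl (eulerH_pos ht (abs_le.2 hx)).ne'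

theorem eulerZ_pos (ht : |t| < 1) : 0 < eulerZ t lam :=
  intervalIntegral_pos_of_pos_on ((continuousOn_eulerW ht).intervalIntegrable_of_Icc (by norm_num))
    (fun _ hx => eulerW_pos ht (abs_lt.2 hx)) (by norm_num)

theorem eulerCov_eq (t lam : ℝ) (f g : ℝ → ℝ) :
    eulerCov t lam f g =
      (eulerZ t lam * (∫ x in (-1 : ℝ)..1, f x * g x * eulerW t lam x)
        - (∫ x in (-1 : ℝ)..1, f x * eulerW t lam x)
          * ∫ x in (-1 : ℝ)..1, g x * eulerW t lam x)
        / eulerZ t lam ^ 2 := by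
  unfold eulerCov eulerE
  rcases eq_or_ne (eulerZ t lam) 0 with hZ | hZ
  · simp [hZ]
  · field_simp

theorem eulerCov_neg_log_eulerH_sq_pos (ht₀ : 0 < t) (ht₁ : t < 1) (hlam : 0 ≤ lam) :
    0 < eulerCov t lam (fun x => -Real.log (eulerH t x)) (fun x => x ^ 2) := by
  have ht : |t| < 1 := by rwa [abs_of_pos ht₀]
  have integrable_of_continuousOn : ∀ {φ : ℝ → ℝ}, ContinuousOn φ (Icc (-1) 1) →
      IntervalIntegrable φ volume (-1) 1 :=
    fun hφ => hφ.intervalIntegrable_of_Icc (by norm_num)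
  have hlog : ContinuousOn (fun x => -Real.log (eulerH t x)) (Icc (-1) 1) :=
    (continuousOn_eulerH_log ht).neg
  have hw := continuousOn_eulerW (lam := lam) ht
  have hsq : ContinuousOn (fun x : ℝ => x ^ 2) (Icc (-1) 1) := by fun_prop
  have iw := integrable_of_continuousOn hw
  have ifw := integrable_of_continuousOn (hlog.mul hw)
  have igw := integrable_of_continuousOn (hsq.mul hw)
  have ifgw := integrable_of_continuousOn ((hlog.mul hsq).mul hw)
  have hpos := integral_integral_pos_of_symmetrization one_pos
    (intervalIntegrable_pairKernel iw ifw igw ifgw)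
    (intervalIntegrable_integral_pairKernel iw ifw igw ifgw)
    (fun u hu y hy => eulerKernel_add_neg_nonneg ht₀.le ht₁ hlam (abs_le.2 hu) (abs_le.2 hy))
    (fun u hu y hy => eulerKernel_add_neg_pos_of_abs_lt ht₀ ht₁ hlam hu.2 (abs_lt.2 hy))
  rw [integral_integral_pairKernel iw ifw igw ifgw] at hpos
  rw [eulerCov_eq]
  exact div_pos (by unfold eulerZ; linarith) (pow_pos (eulerZ_pos ht) 2)

end EulerCovariance

/-- Euler-factor tilt, large-`p` regime: for every `λ > 0` there is `p₀` such
that for every prime `p ≥ p₀`, with `t = 1/√p` and `g_t(x) = −log h_t(x)`,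
the covariance `Cov^t_λ(g_t, x²)` is strictly positive. -/
theorem eulerCov_pos_large_p (lam : ℝ) (hlam : 0 < lam) :
    ∃ p₀ : ℕ, ∀ p : ℕ, p.Prime → p₀ ≤ p →
      0 < eulerCov (1 / Real.sqrt p) lam
            (fun x => -Real.log (eulerH (1 / Real.sqrt p) x)) (fun x => x ^ 2) := by
  refine ⟨2, fun p _ hp => eulerCov_neg_log_eulerH_sq_pos (by positivity) ?_ hlam.le⟩
  have : (1 : ℝ) < Real.sqrt p := by
    rw [Real.lt_sqrt zero_le_one, one_pow]; exact_mod_cast hp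
  exact (div_lt_one (by positivity)).2 this
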